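/- For all integers t, r ≥ 2, the immersion number of the direct product K_t × K_r equals (t−1)(r−1) + 1. -/

import Mathlib

set_option linter.unusedVariables false

open SimpleGraph

/-- A graph `G` has a `K_t`-immersion: `t` terminal vertices (injective `φ`) together with
pairwise edge-disjoint paths joining every pair of terminals. -/
def HasCliqueImmersion {V : Type*} (G : SimpleGraph V) (t : ℕ) : Prop :=
  ∃ φ : Fin t → V, Function.Injective φ ∧
    ∃ P : ∀ i j : Fin t, G.Walk (φ i) (φ j),
      (∀ i j : Fin t, i < j → (P i j).IsPath) ∧
      (∀ i j k l : Fin t, i < j → k < l → (i, j) ≠ (k, l) →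
        List.Disjoint (P i j).edges (P k l).edges)

/-- The immersion number of `G`: the largest `t` such that `G` has a `K_t`-immersion. -/
noncomputable def immersionNumber {V : Type*} (G : SimpleGraph V) : ℕ :=
  sSup {t | HasCliqueImmersion G t}

/-- Lexicographic product. -/
def lexProd {α β : Type*} (G : SimpleGraph α) (H : SimpleGraph β) :
    SimpleGraph (α × β) where
  Adj x y := G.Adj x.1 y.1 ∨ (x.1 = y.1 ∧ H.Adj x.2 y.2)
  symm := by refine ⟨?_⟩; rintro x y (h | ⟨h1, h2⟩); exact Or.inl h.symm; exact Or.inr ⟨h1.symm, h2.symm⟩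
  loopless := by refine ⟨?_⟩; rintro x (h | ⟨-, h⟩) <;> exact h.ne rfl

/-- Direct (tensor) product. -/
def directProd {α β : Type*} (G : SimpleGraph α) (H : SimpleGraph β) :
    SimpleGraph (α × β) where
  Adj x y := G.Adj x.1 y.1 ∧ H.Adj x.2 y.2
  symm := by refine ⟨?_⟩; rintro x y ⟨h1, h2⟩; exact ⟨h1.symm, h2.symm⟩
  loopless := by refine ⟨?_⟩; rintro x ⟨h, -⟩; exact h.ne rfl

/-- Strong product. -/
def strongProd {α β : Type*} (G : SimpleGraph α) (H : SimpleGraph β) :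
    SimpleGraph (α × β) :=
  (G.boxProd H) ⊔ (directProd G H)

/-- Cartesian power: `d`-fold Cartesian (box) product of `G` with itself. -/
def boxPow {α : Type*} (G : SimpleGraph α) (d : ℕ) : SimpleGraph (Fin d → α) where
  Adj x y := ∃ i, G.Adj (x i) (y i) ∧ ∀ j, j ≠ i → x j = y j
  symm := by refine ⟨?_⟩; rintro x y ⟨i, h, hj⟩; exact ⟨i, h.symm, fun j hji => (hj j hji).symm⟩
  loopless := by refine ⟨?_⟩; rintro x ⟨i, h, -⟩; exact h.ne rfl

instance {α β : Type*} [DecidableEq α] (G : SimpleGraph α) (H : SimpleGraph β)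
    [DecidableRel G.Adj] [DecidableRel H.Adj] : DecidableRel (lexProd G H).Adj :=
  fun x y => inferInstanceAs (Decidable (_ ∨ _))

instance {α β : Type*} (G : SimpleGraph α) (H : SimpleGraph β)
    [DecidableRel G.Adj] [DecidableRel H.Adj] : DecidableRel (directProd G H).Adj :=
  fun x y => inferInstanceAs (Decidable (_ ∧ _))

instance {α β : Type*} [DecidableEq α] [DecidableEq β] (G : SimpleGraph α) (H : SimpleGraph β)
    [DecidableRel G.Adj] [DecidableRel H.Adj] : DecidableRel (G.boxProd H).Adj :=
  fun x y => decidable_of_iff _ (SimpleGraph.boxProd_adj).symm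

instance {α β : Type*} [DecidableEq α] [DecidableEq β] (G : SimpleGraph α) (H : SimpleGraph β)
    [DecidableRel G.Adj] [DecidableRel H.Adj] : DecidableRel (strongProd G H).Adj :=
  fun x y => inferInstanceAs (Decidable (_ ∨ _))

set_option linter.unusedSectionVars false

namespace ImmProof
open SimpleGraph Walk

/-! ### Basic setup -/

abbrev KK (p q : ℕ) : SimpleGraph (Fin (p+1) × Fin (q+1)) :=
  directProd (⊤ : SimpleGraph (Fin (p+1))) (⊤ : SimpleGraph (Fin (q+1)))

lemma KK_adj {p q : ℕ} {u v : Fin (p+1) × Fin (q+1)} :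
    (KK p q).Adj u v ↔ u.1 ≠ v.1 ∧ u.2 ≠ v.2 := by
  simp [directProd, top_adj]

section verts
variable (p q : ℕ) [NeZero p] [NeZero q]

def rV (a : ZMod p) : Fin (p+1) := ⟨a.val, Nat.lt_succ_of_lt a.val_lt⟩
def topR : Fin (p+1) := ⟨p, Nat.lt_succ_self p⟩

variable {p q}

lemma rV_inj {a b : ZMod p} (h : rV p a = rV p b) : a = b := by
  have := congrArg Fin.val h
  simp only [rV] at this
  exact ZMod.val_injective _ this

lemma rV_ne_topR {a : ZMod p} : rV p a ≠ topR p := by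
  intro h
  have := congrArg Fin.val h
  simp only [rV, topR] at this
  exact absurd this (Nat.ne_of_lt a.val_lt)

end verts

section verts2
variable {p q : ℕ} [NeZero p] [NeZero q]

/-- grid vertex -/
def gV (a : ZMod p) (b : ZMod q) : Fin (p+1) × Fin (q+1) := (rV p a, rV q b)
/-- top-row vertex `(t, y)` -/
def Tv (y : ZMod q) : Fin (p+1) × Fin (q+1) := (topR p, rV q y)
/-- right-column vertex `(x, r)` -/
def Rv (x : ZMod p) : Fin (p+1) × Fin (q+1) := (rV p x, topR q)
/-- corner `(t, r)` -/
def cnr : Fin (p+1) × Fin (q+1) := (topR p, topR q)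

lemma gV_inj {a c : ZMod p} {b d : ZMod q} (h : gV a b = gV c d) : a = c ∧ b = d := by
  rw [gV, gV, Prod.mk.injEq] at h
  exact ⟨rV_inj h.1, rV_inj h.2⟩

lemma adj_gg {a c : ZMod p} {b d : ZMod q} (h1 : a ≠ c) (h2 : b ≠ d) :
    (KK p q).Adj (gV a b) (gV c d) :=
  KK_adj.2 ⟨fun h => h1 (rV_inj h), fun h => h2 (rV_inj h)⟩

lemma adj_gT {a : ZMod p} {b y : ZMod q} (h : y ≠ b) :
    (KK p q).Adj (gV a b) (Tv y) :=
  KK_adj.2 ⟨rV_ne_topR, fun h' => h (rV_inj h'.symm)⟩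

lemma adj_gR {a x : ZMod p} {b : ZMod q} (h : x ≠ a) :
    (KK p q).Adj (gV a b) (Rv x) :=
  KK_adj.2 ⟨fun h' => h (rV_inj h'.symm), rV_ne_topR⟩

lemma adj_gC {a : ZMod p} {b : ZMod q} : (KK p q).Adj (gV a b) cnr :=
  KK_adj.2 ⟨rV_ne_topR, rV_ne_topR⟩

lemma adj_TR {y : ZMod q} {x : ZMod p} : (KK p q).Adj (Tv y) (Rv x) :=
  KK_adj.2 ⟨fun h => rV_ne_topR h.symm, rV_ne_topR⟩

lemma gV_ne_Tv {a : ZMod p} {b y : ZMod q} : gV a b ≠ Tv y := by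
  intro h; exact rV_ne_topR (congrArg Prod.fst h)

lemma gV_ne_Rv {a x : ZMod p} {b : ZMod q} : gV a b ≠ Rv x := by
  intro h; exact rV_ne_topR (congrArg Prod.snd h)

lemma gV_ne_cnr {a : ZMod p} {b : ZMod q} : gV a b ≠ cnr := by
  intro h; exact rV_ne_topR (congrArg Prod.fst h)

lemma Tv_ne_Rv {y : ZMod q} {x : ZMod p} : Tv (p := p) y ≠ Rv x := by
  intro h
  have := congrArg Prod.fst h
  simp only [Tv, Rv] at this
  exact rV_ne_topR this.symm

lemma Tv_inj {y y' : ZMod q} (h : Tv (p := p) y = Tv y') : y = y' :=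
  rV_inj (congrArg Prod.snd h)

lemma Rv_inj {x x' : ZMod p} (h : Rv (q := q) x = Rv x') : x = x' :=
  rV_inj (congrArg Prod.fst h)

lemma gV_ne_gV_left {a c : ZMod p} {b d : ZMod q} (h : a ≠ c) : gV a b ≠ gV c d :=
  fun he => h (gV_inj he).1

lemma gV_ne_gV_right {a c : ZMod p} {b d : ZMod q} (h : b ≠ d) : gV a b ≠ gV c d :=
  fun he => h (gV_inj he).2

end verts2

/-! ### Walk builders -/

section walks
variable {V : Type*} {G : SimpleGraph V}

def W1 {u v : V} (h : G.Adj u v) : G.Walk u v := Walk.cons h Walk.nil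

def W2 {u m v : V} (h1 : G.Adj u m) (h2 : G.Adj m v) : G.Walk u v :=
  Walk.cons h1 (W1 h2)

def W3 {u m1 m2 v : V} (h1 : G.Adj u m1) (h2 : G.Adj m1 m2) (h3 : G.Adj m2 v) :
    G.Walk u v := Walk.cons h1 (W2 h2 h3)

def W4 {u m1 m2 m3 v : V} (h1 : G.Adj u m1) (h2 : G.Adj m1 m2) (h3 : G.Adj m2 m3)
    (h4 : G.Adj m3 v) : G.Walk u v := Walk.cons h1 (W3 h2 h3 h4)

lemma W1_path {u v : V} (h : G.Adj u v) : (W1 h).IsPath := by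
  simp [W1, h.ne]

lemma W2_path {u m v : V} (h1 : G.Adj u m) (h2 : G.Adj m v) (huv : u ≠ v) :
    (W2 h1 h2).IsPath := by
  simp [W2, W1, Walk.cons_isPath_iff, h1.ne, h2.ne, huv]

lemma W3_path {u m1 m2 v : V} (h1 : G.Adj u m1) (h2 : G.Adj m1 m2) (h3 : G.Adj m2 v)
    (h02 : u ≠ m2) (h0v : u ≠ v) (h1v : m1 ≠ v) : (W3 h1 h2 h3).IsPath := by
  simp [W3, W2, W1, Walk.cons_isPath_iff, h1.ne, h2.ne, h3.ne, h02, h0v, h1v]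

lemma W4_path {u m1 m2 m3 v : V} (h1 : G.Adj u m1) (h2 : G.Adj m1 m2) (h3 : G.Adj m2 m3)
    (h4 : G.Adj m3 v) (h02 : u ≠ m2) (h03 : u ≠ m3) (h0v : u ≠ v) (h13 : m1 ≠ m3)
    (h1v : m1 ≠ v) (h2v : m2 ≠ v) : (W4 h1 h2 h3 h4).IsPath := by
  simp [W4, W3, W2, W1, Walk.cons_isPath_iff, h1.ne, h2.ne, h3.ne, h4.ne,
    h02, h03, h0v, h13, h1v, h2v]

lemma W1_darts {u v : V} (h : G.Adj u v) : (W1 h).darts = [⟨(u, v), h⟩] := rfl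

lemma W2_darts {u m v : V} (h1 : G.Adj u m) (h2 : G.Adj m v) :
    (W2 h1 h2).darts = [⟨(u, m), h1⟩, ⟨(m, v), h2⟩] := rfl

lemma W3_darts {u m1 m2 v : V} (h1 : G.Adj u m1) (h2 : G.Adj m1 m2) (h3 : G.Adj m2 v) :
    (W3 h1 h2 h3).darts = [⟨(u, m1), h1⟩, ⟨(m1, m2), h2⟩, ⟨(m2, v), h3⟩] := rfl

lemma W4_darts {u m1 m2 m3 v : V} (h1 : G.Adj u m1) (h2 : G.Adj m1 m2) (h3 : G.Adj m2 m3)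
    (h4 : G.Adj m3 v) :
    (W4 h1 h2 h3 h4).darts =
      [⟨(u, m1), h1⟩, ⟨(m1, m2), h2⟩, ⟨(m2, m3), h3⟩, ⟨(m3, v), h4⟩] := rfl

end walks

/-! ### Glue lemma -/

lemma glue {V I : Type*} [Fintype I] [DecidableEq I] (G : SimpleGraph V)
    (φ : I → V) (hφ : Function.Injective φ)
    (F : V → V → Sym2 I)
    (Wk : ∀ i j : I, i ≠ j → G.Walk (φ i) (φ j))
    (hP : ∀ i j h, (Wk i j h).IsPath)
    (hL : ∀ i j h, ∀ d ∈ (Wk i j h).darts,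
        F d.toProd.1 d.toProd.2 = s(i, j) ∧ F d.toProd.2 d.toProd.1 = s(i, j)) :
    HasCliqueImmersion G (Fintype.card I) := by
  classical
  let e := (Fintype.equivFin I).symm
  have hne : ∀ {i j : Fin (Fintype.card I)}, i ≠ j → e i ≠ e j :=
    fun h he => h (e.injective he)
  refine ⟨φ ∘ e, hφ.comp e.injective, ?_⟩
  refine ⟨fun i j =>
    if h : i = j then Walk.copy Walk.nil rfl (congrArg (fun k => φ (e k)) h)
    else Wk (e i) (e j) (hne h), ?_, ?_⟩
  · intro i j hij
    dsimp only
    rw [dif_neg (Fin.ne_of_lt hij)]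
    exact hP _ _ _
  · intro i j k l hij hkl hne2
    dsimp only
    rw [dif_neg (Fin.ne_of_lt hij), dif_neg (Fin.ne_of_lt hkl)]
    intro ed hed1 hed2
    simp only [Walk.edges, List.mem_map] at hed1 hed2
    obtain ⟨d1, hd1, he1⟩ := hed1
    obtain ⟨d2, hd2, he2⟩ := hed2
    have hee : s(d1.toProd.1, d1.toProd.2) = s(d2.toProd.1, d2.toProd.2) := by
      rw [show s(d1.toProd.1, d1.toProd.2) = d1.edge from rfl, show s(d2.toProd.1, d2.toProd.2) = d2.edge from rfl,
        he1, he2]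
    have hF1 := hL _ _ _ d1 hd1
    have hF2 := hL _ _ _ d2 hd2
    have key : s(e i, e j) = s(e k, e l) := by
      rcases Sym2.mk_eq_mk_iff.1 hee with h | h
      · rw [← hF1.1, ← hF2.1, h]
      · rw [← hF1.1, ← hF2.2]
        rw [h]
        rfl
    rcases Sym2.eq_iff.1 key with ⟨h1, h2⟩ | ⟨h1, h2⟩
    · exact hne2 (by rw [e.injective h1, e.injective h2])
    · have : i = l := e.injective h1
      have : j = k := e.injective h2
      omega
  
lemma immersionNumber_eq {V : Type*} (G : SimpleGraph V) (n : ℕ)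
    (h1 : HasCliqueImmersion G n) (h2 : ∀ m, HasCliqueImmersion G m → m ≤ n) :
    immersionNumber G = n :=
  le_antisymm (csSup_le ⟨n, h1⟩ h2) (le_csSup ⟨n, h2⟩ h1)

end ImmProof
namespace ImmProof
open SimpleGraph Walk

lemma firstEdge_mem {V : Type*} {G : SimpleGraph V} {u v : V} (w : G.Walk u v)
    (h : ¬ w.Nil) : s(u, w.getVert 1) ∈ w.edges := by
  cases w with
  | nil => simp at h
  | cons h' p =>
    rw [Walk.getVert_cons_succ, Walk.getVert_zero, Walk.edges_cons]
    exact List.mem_cons_self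

lemma upper {p q : ℕ} [NeZero p] [NeZero q] (n : ℕ)
    (h : HasCliqueImmersion (KK p q) n) : n ≤ p * q + 1 := by
  rcases Nat.eq_zero_or_pos n with rfl | hn
  · omega
  obtain ⟨φ, hφ, P, hP, hD⟩ := h
  let z : Fin n := ⟨0, hn⟩
  have hadj : ∀ j : Fin n, z < j → (KK p q).Adj (φ z) ((P z j).getVert 1) := by
    intro j hj
    exact Walk.adj_snd (Walk.not_nil_of_ne (fun he => (Fin.ne_of_lt hj) (hφ he)))
  have hmem : ∀ (j : Fin n), z < j → s(φ z, (P z j).getVert 1) ∈ (P z j).edges := by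
    intro j hj
    exact firstEdge_mem _ (Walk.not_nil_of_ne (fun he => (Fin.ne_of_lt hj) (hφ he)))
  let f : {j : Fin n // z < j} → {v // (KK p q).Adj (φ z) v} :=
    fun j => ⟨(P z j.1).getVert 1, hadj j.1 j.2⟩
  have hinj : Function.Injective f := by
    rintro ⟨j, hj⟩ ⟨k, hk⟩ heq
    simp only [f, Subtype.mk.injEq] at heq ⊢
    by_contra hjk
    refine hD z j z k hj hk (fun hh => hjk (Prod.mk.injEq _ _ _ _ ▸ hh).2) (hmem j hj) ?_
    rw [heq]; exact hmem k hk
  have hcard := Fintype.card_le_of_injective f hinj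
  have hc1 : Fintype.card {j : Fin n // z < j} = n - 1 := by
    have : ∀ j : Fin n, z < j ↔ ¬ (j = z) := by
      intro j
      constructor
      · intro hj hh; rw [hh] at hj; exact lt_irrefl _ hj
      · intro hj
        have : (0 : ℕ) < j.val := Nat.pos_of_ne_zero (fun hh => hj (Fin.ext hh))
        exact this
    rw [Fintype.card_congr (Equiv.subtypeEquivRight this), Fintype.card_subtype_compl,
      Fintype.card_subtype_eq, Fintype.card_fin]
  have hc2 : Fintype.card {v // (KK p q).Adj (φ z) v} = p * q := by
    have : ∀ v : Fin (p+1) × Fin (q+1),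
        (KK p q).Adj (φ z) v ↔ (fun x => ¬ (x = (φ z).1)) v.1 ∧ (fun y => ¬ (y = (φ z).2)) v.2 := by
      intro v
      rw [KK_adj]
      simp [eq_comm]
    have h2 := Fintype.card_congr
      (@Equiv.subtypeProdEquivProd (Fin (p+1)) (Fin (q+1)) (fun x => ¬ (x = (φ z).1))
        (fun y => ¬ (y = (φ z).2)))
    rw [Fintype.card_congr (Equiv.subtypeEquivRight this), h2, Fintype.card_prod,
      Fintype.card_subtype_compl, Fintype.card_subtype_eq, Fintype.card_fin,
      Fintype.card_subtype_compl, Fintype.card_subtype_eq, Fintype.card_fin]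
    simp
  rw [hc1, hc2] at hcard
  omega

end ImmProof
namespace ImmProof
open SimpleGraph Walk

/-! ### ZMod helpers -/

/-- inverse of 2 mod odd n -/
def iv (n : ℕ) : ZMod n := (((n+1)/2 : ℕ) : ZMod n)

lemma two_iv {n : ℕ} [NeZero n] (h : n % 2 = 1) : (2 : ZMod n) * iv n = 1 := by
  have h2 : ((2 * ((n+1)/2) : ℕ) : ZMod n) = ((n + 1 : ℕ) : ZMod n) := by
    congr 1; omega
  have : ((n : ℕ) : ZMod n) = 0 := ZMod.natCast_self n
  push_cast at h2
  rw [iv]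
  push_cast
  rw [h2, this]
  ring

lemma ciq_ne_left {n : ℕ} [NeZero n] (hι : (2 : ZMod n) * iv n = 1) {b d : ZMod n}
    (h : b ≠ d) : (b + d) * iv n ≠ b := by
  intro hh
  exact h (by linear_combination (b + d) * hι - 2 * hh)

lemma ciq_ne_right {n : ℕ} [NeZero n] (hι : (2 : ZMod n) * iv n = 1) {b d : ZMod n}
    (h : b ≠ d) : (b + d) * iv n ≠ d := by
  intro hh
  exact h (by linear_combination 2 * hh - (b + d) * hι)

/-! ### vertex category decoding -/

section cat
variable {p q : ℕ} [NeZero p] [NeZero q]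

inductive VC (p q : ℕ) : Type
  | g (a : ZMod p) (b : ZMod q) : VC p q
  | T (y : ZMod q) : VC p q
  | R (x : ZMod p) : VC p q
  | C : VC p q

def catOf (u : Fin (p+1) × Fin (q+1)) : VC p q :=
  if u.1.val < p then
    if u.2.val < q then .g (u.1.val : ZMod p) (u.2.val : ZMod q)
    else .R (u.1.val : ZMod p)
  else
    if u.2.val < q then .T (u.2.val : ZMod q)
    else .C

lemma catOf_gV {a : ZMod p} {b : ZMod q} : catOf (gV a b) = .g a b := by
  rw [catOf, gV, rV, rV]
  simp only [ZMod.val_lt, if_pos, a.val_lt, b.val_lt]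
  rw [ZMod.natCast_rightInverse a, ZMod.natCast_rightInverse b]

lemma catOf_Tv {y : ZMod q} : catOf (Tv (p := p) y) = .T y := by
  rw [catOf, Tv, rV, topR]
  simp only
  rw [if_neg (lt_irrefl p), if_pos y.val_lt, ZMod.natCast_rightInverse y]

lemma catOf_Rv {x : ZMod p} : catOf (Rv (q := q) x) = .R x := by
  rw [catOf, Rv, rV, topR]
  simp only
  rw [if_pos x.val_lt, if_neg (lt_irrefl q), ZMod.natCast_rightInverse x]

lemma catOf_cnr : catOf (cnr : Fin (p+1) × Fin (q+1)) = .C := by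
  rw [catOf, cnr, topR, topR]
  simp only
  rw [if_neg (lt_irrefl p), if_neg (lt_irrefl q)]

end cat

/-! ### Scheme S1 : p, q both odd -/

section S1
variable {p q : ℕ} [NeZero p] [NeZero q]

abbrev Idx (p q : ℕ) : Type := Option (ZMod p × ZMod q)

def φ0 : Idx p q → Fin (p+1) × Fin (q+1)
  | none => cnr
  | some (a, b) => gV a b

lemma φ0_inj : Function.Injective (φ0 (p := p) (q := q)) := by
  rintro (_ | ⟨a, b⟩) (_ | ⟨c, d⟩) h
  · rfl
  · exact absurd h.symm gV_ne_cnr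
  · exact absurd h gV_ne_cnr
  · obtain ⟨h1, h2⟩ := gV_inj h
    rw [h1, h2]

/-- ownership function for scheme S1 -/
def F1 (u v : Fin (p+1) × Fin (q+1)) : Sym2 (Idx p q) :=
  match catOf u, catOf v with
  | .g a b, .g c d => s(some (a, b), some (c, d))
  | .g a b, .C => s(some (a, b), none)
  | .C, .g a b => s(some (a, b), none)
  | .g a b, .T y => s(some (a, b), some (a, 2 * y - b))
  | .T y, .g a b => s(some (a, b), some (a, 2 * y - b))
  | .g a b, .R x => s(some (a, b), some (2 * x - a, b))
  | .R x, .g a b => s(some (a, b), some (2 * x - a, b))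
  | _, _ => s(none, none)

def S1walk (hp : p % 2 = 1) (hq : q % 2 = 1) (i j : Idx p q) (h : i ≠ j) : (KK p q).Walk (φ0 i) (φ0 j) :=
  match i, j, h with
  | none, none, h => absurd rfl h
  | none, some (a, b), _ => W1 adj_gC.symm
  | some (a, b), none, _ => W1 adj_gC
  | some (a, b), some (c, d), h =>
    if hac : a = c then
      have hbd : b ≠ d := fun he => h (by rw [hac, he])
      W2 (adj_gT (ciq_ne_left (two_iv hq) hbd))
        ((adj_gT (ciq_ne_right (two_iv hq) hbd)).symm)
    else if hbd : b = d then
      W2 (adj_gR (ciq_ne_left (two_iv hp) hac))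
        ((adj_gR (ciq_ne_right (two_iv hp) hac)).symm)
    else W1 (adj_gg hac hbd)

end S1
end ImmProof
namespace ImmProof
open SimpleGraph Walk

section S1b
variable {p q : ℕ} [NeZero p] [NeZero q]

lemma S1_path (hp : p % 2 = 1) (hq : q % 2 = 1) :
    ∀ i j h, (S1walk (p := p) (q := q) hp hq i j h).IsPath := by
  intro i j h
  match i, j with
  | none, none => exact absurd rfl h
  | none, some (a, b) => exact W1_path _
  | some (a, b), none => exact W1_path _
  | some (a, b), some (c, e) =>
    rw [S1walk]
    split_ifs with hac hbe
    · subst hac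
      have hbe : b ≠ e := fun he => h (by rw [he])
      exact W2_path _ _ (gV_ne_gV_right hbe)
    · subst hbe
      exact W2_path _ _ (gV_ne_gV_left hac)
    · exact W1_path _

lemma S1_label (hp : p % 2 = 1) (hq : q % 2 = 1) :
    ∀ i j h, ∀ d ∈ (S1walk (p := p) (q := q) hp hq i j h).darts,
      F1 d.toProd.1 d.toProd.2 = s(i, j) ∧ F1 d.toProd.2 d.toProd.1 = s(i, j) := by
  intro i j h d hd
  match i, j with
  | none, none => exact absurd rfl h
  | none, some (a, b) =>
    rw [S1walk] at hd; erw [W1_darts, List.mem_singleton] at hd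
    subst hd
    constructor
    · simp only [F1, φ0, catOf_cnr, catOf_gV]
      exact Sym2.eq_swap
    · simp only [F1, φ0, catOf_cnr, catOf_gV]
      exact Sym2.eq_swap
  | some (a, b), none =>
    rw [S1walk] at hd; erw [W1_darts, List.mem_singleton] at hd
    subst hd
    constructor
    · simp only [F1, φ0, catOf_cnr, catOf_gV]
    · simp only [F1, φ0, catOf_cnr, catOf_gV]
  | some (a, b), some (c, e) =>
    rw [S1walk] at hd
    split_ifs at hd with hac hbe
    · -- row pair
      subst hac
      have hbe : b ≠ e := fun he => h (by rw [he])
      erw [W2_darts] at hd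
      have hm1 : 2 * ((b + e) * iv q) - b = e := by linear_combination (b + e) * (two_iv hq)
      have hm2 : 2 * ((b + e) * iv q) - e = b := by linear_combination (b + e) * (two_iv hq)
      simp only [List.mem_cons, List.not_mem_nil, or_false] at hd
      rcases hd with rfl | rfl
      · constructor
        · simp only [F1, φ0, catOf_gV, catOf_Tv, hm1]
        · simp only [F1, φ0, catOf_gV, catOf_Tv, hm1]
      · constructor
        · simp only [F1, φ0, catOf_gV, catOf_Tv, hm2]
          exact Sym2.eq_swap
        · simp only [F1, φ0, catOf_gV, catOf_Tv, hm2]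
          exact Sym2.eq_swap
    · -- column pair
      subst hbe
      erw [W2_darts] at hd
      have hm1 : 2 * ((a + c) * iv p) - a = c := by linear_combination (a + c) * (two_iv hp)
      have hm2 : 2 * ((a + c) * iv p) - c = a := by linear_combination (a + c) * (two_iv hp)
      simp only [List.mem_cons, List.not_mem_nil, or_false] at hd
      rcases hd with rfl | rfl
      · constructor
        · simp only [F1, φ0, catOf_gV, catOf_Rv, hm1]
        · simp only [F1, φ0, catOf_gV, catOf_Rv, hm1]
      · constructor
        · simp only [F1, φ0, catOf_gV, catOf_Rv, hm2]
          exact Sym2.eq_swap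
        · simp only [F1, φ0, catOf_gV, catOf_Rv, hm2]
          exact Sym2.eq_swap
    · erw [W1_darts, List.mem_singleton] at hd
      subst hd
      constructor
      · simp only [F1, φ0, catOf_gV]
      · simp only [F1, φ0, catOf_gV]
        exact Sym2.eq_swap

lemma card_Idx : Fintype.card (Idx p q) = p * q + 1 := by
  simp [Idx]

theorem schemeS1 (hp : p % 2 = 1) (hq : q % 2 = 1) :
    HasCliqueImmersion (KK p q) (p * q + 1) := by
  have := glue (KK p q) φ0 φ0_inj F1 (S1walk hp hq) (S1_path hp hq) (S1_label hp hq)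
  rwa [card_Idx] at this

end S1b
end ImmProof
namespace ImmProof
open SimpleGraph Walk

lemma hasCliqueImmersion_map {V W : Type*} {G : SimpleGraph V} {H : SimpleGraph W}
    (e : G ≃g H) {n : ℕ} (h : HasCliqueImmersion G n) : HasCliqueImmersion H n := by
  obtain ⟨φ, hφ, P, h1, h2⟩ := h
  refine ⟨fun i => e (φ i), fun i j hij => hφ (e.toEquiv.injective hij), 
    fun i j => (P i j).map e.toHom, ?_, ?_⟩
  · intro i j hij
    exact Walk.map_isPath_of_injective e.toEquiv.injective (h1 i j hij)
  · intro i j k l hij hkl hne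
    intro x hx1 hx2
    rw [Walk.edges_map, List.mem_map] at hx1 hx2
    obtain ⟨y1, hy1, he1⟩ := hx1
    obtain ⟨y2, hy2, he2⟩ := hx2
    have : y1 = y2 := Sym2.map.injective e.toEquiv.injective (he1.trans he2.symm)
    subst this
    exact h2 i j k l hij hkl hne hy1 hy2

def swapIso (p q : ℕ) : KK p q ≃g KK q p where
  toEquiv := (Equiv.prodComm (Fin (p+1)) (Fin (q+1)))
  map_rel_iff' := by
    intro u v
    rw [KK_adj, KK_adj]
    exact and_comm

lemma KK_swap {p q n : ℕ} (h : HasCliqueImmersion (KK q p) n) :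
    HasCliqueImmersion (KK p q) n :=
  hasCliqueImmersion_map (swapIso q p) h

end ImmProof
namespace ImmProof
open SimpleGraph Walk

section S5
lemma z2succ : ∀ a : ZMod 2, a + 1 ≠ a := by decide
lemma z2other : ∀ a b : ZMod 2, a ≠ b → b = a + 1 := by decide

def F5 (u v : Fin 3 × Fin 3) : Sym2 (Idx 2 2) :=
  match catOf u, catOf v with
  | .g a b, .g c d => s(some (a, b), some (c, d))
  | .g a b, .C => s(some (a, b), none)
  | .C, .g a b => s(some (a, b), none)
  | .g a b, .T _ => s(some (a, b), some (a + 1, b))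
  | .T _, .g a b => s(some (a, b), some (a + 1, b))
  | .g a b, .R _ => s(some (a, b), some (a, b + 1))
  | .R _, .g a b => s(some (a, b), some (a, b + 1))
  | _, _ => s(none, none)

def S5walk (i j : Idx 2 2) (h : i ≠ j) : (KK 2 2).Walk (φ0 i) (φ0 j) :=
  match i, j, h with
  | none, none, h => absurd rfl h
  | none, some (a, b), _ => W1 adj_gC.symm
  | some (a, b), none, _ => W1 adj_gC
  | some (a, b), some (c, d), h =>
    if hac : a = c then
      W2 (adj_gR (z2succ a)) ((adj_gR (hac ▸ z2succ a)).symm)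
    else if hbd : b = d then
      W2 (adj_gT (z2succ b)) ((adj_gT (hbd ▸ z2succ b)).symm)
    else W1 (adj_gg hac hbd)

lemma S5_path : ∀ i j h, (S5walk i j h).IsPath := by
  intro i j h
  match i, j with
  | none, none => exact absurd rfl h
  | none, some (a, b) => exact W1_path _
  | some (a, b), none => exact W1_path _
  | some (a, b), some (c, e) =>
    rw [S5walk]
    split_ifs with hac hbe
    · subst hac
      exact W2_path _ _ (gV_ne_gV_right (fun he => h (by rw [he])))
    · subst hbe
      exact W2_path _ _ (gV_ne_gV_left hac)
    · exact W1_path _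

lemma S5_label : ∀ i j h, ∀ d ∈ (S5walk i j h).darts,
    F5 d.toProd.1 d.toProd.2 = s(i, j) ∧ F5 d.toProd.2 d.toProd.1 = s(i, j) := by
  intro i j h d hd
  match i, j with
  | none, none => exact absurd rfl h
  | none, some (a, b) =>
    rw [S5walk] at hd; erw [W1_darts, List.mem_singleton] at hd
    subst hd
    exact ⟨by simp only [F5, φ0, catOf_cnr, catOf_gV]; exact Sym2.eq_swap,
      by simp only [F5, φ0, catOf_cnr, catOf_gV]; exact Sym2.eq_swap⟩
  | some (a, b), none =>
    rw [S5walk] at hd; erw [W1_darts, List.mem_singleton] at hd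
    subst hd
    exact ⟨by simp only [F5, φ0, catOf_cnr, catOf_gV],
      by simp only [F5, φ0, catOf_cnr, catOf_gV]⟩
  | some (a, b), some (c, e) =>
    rw [S5walk] at hd
    split_ifs at hd with hac hbe
    · subst hac
      have hbe : b ≠ e := fun he => h (by rw [he])
      have h1 : b + 1 = e := (z2other b e hbe).symm
      have h2 : e + 1 = b := (z2other e b hbe.symm).symm
      erw [W2_darts] at hd
      simp only [List.mem_cons, List.not_mem_nil, or_false] at hd
      rcases hd with rfl | rfl
      · exact ⟨by simp only [F5, φ0, catOf_gV, catOf_Rv, h1],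
          by simp only [F5, φ0, catOf_gV, catOf_Rv, h1]⟩
      · exact ⟨by simp only [F5, φ0, catOf_gV, catOf_Rv, h2]; exact Sym2.eq_swap,
          by simp only [F5, φ0, catOf_gV, catOf_Rv, h2]; exact Sym2.eq_swap⟩
    · subst hbe
      have h1 : a + 1 = c := (z2other a c hac).symm
      have h2 : c + 1 = a := (z2other c a (Ne.symm hac)).symm
      erw [W2_darts] at hd
      simp only [List.mem_cons, List.not_mem_nil, or_false] at hd
      rcases hd with rfl | rfl
      · exact ⟨by simp only [F5, φ0, catOf_gV, catOf_Tv, h1],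
          by simp only [F5, φ0, catOf_gV, catOf_Tv, h1]⟩
      · exact ⟨by simp only [F5, φ0, catOf_gV, catOf_Tv, h2]; exact Sym2.eq_swap,
          by simp only [F5, φ0, catOf_gV, catOf_Tv, h2]; exact Sym2.eq_swap⟩
    · erw [W1_darts, List.mem_singleton] at hd
      subst hd
      exact ⟨by simp only [F5, φ0, catOf_gV],
        by simp only [F5, φ0, catOf_gV]; exact Sym2.eq_swap⟩

theorem schemeS5' : HasCliqueImmersion (KK 2 2) (2 * 2 + 1) := by
  have := glue (KK 2 2) φ0 φ0_inj F5 S5walk S5_path S5_label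
  rwa [card_Idx] at this

end S5
end ImmProof
namespace ImmProof
open SimpleGraph

/-! ### Skolem-type gadget for even order -/

def Aval (m k : ℕ) : ℕ := if k % 2 = 1 then m + 1 + (k-1)/2 else k/2
def Bval (m k : ℕ) : ℕ := if k % 2 = 1 then m - (k-1)/2 else 2*m - k/2
/-- the leftover shift -/
def dlt (m : ℕ) : ℕ := (m+1)/2

section gadget
variable {n : ℕ} [NeZero n] {m : ℕ}

/-- symmetric midpoint-shift function on pairs `{a,c}` with `c ∉ {a, a+m}` -/
def scol (m : ℕ) (a c : ZMod n) : ZMod n :=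
  if (c - a).val < m then a + ((Aval m (c-a).val : ℕ) : ZMod n)
  else c + ((Aval m (a-c).val : ℕ) : ZMod n)

/-- partner-decoding function: given terminal `a` and midpoint shift value `w`,
recover the partner. -/
def pdec (m : ℕ) (a w : ZMod n) : ZMod n :=
  if (w - a).val ≤ (m-1)/2 ∨ n - (m-1)/2 ≤ (w - a).val then 2*w - a else 2*w - a - 1

lemma val_neg'' {a : ZMod n} (h : a ≠ 0) : (-a).val = n - a.val := by
  haveI : NeZero a := ⟨h⟩
  exact ZMod.val_neg_of_ne_zero a

lemma val_sub_add_val {a c : ZMod n} (h : c ≠ a) : (c - a).val + (a - c).val = n := by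
  have h1 : c - a ≠ 0 := sub_ne_zero.2 h
  have h2 : a - c = -(c - a) := by ring
  rw [h2, val_neg'' h1]
  have := (c - a).val_lt
  have : (c - a).val ≠ 0 := fun hh => h1 ((ZMod.val_eq_zero _).1 hh)
  omega

lemma kfacts (hm : n = 2*m) {a c : ZMod n} (hca : c ≠ a) (hcm : c - a ≠ ((m:ℕ) : ZMod n)) 
    (hlt : (c - a).val < m) : 1 ≤ (c - a).val ∧ (c - a).val ≤ m - 1 := by
  have h1 : c - a ≠ 0 := sub_ne_zero.2 hca
  have hv : (c - a).val ≠ 0 := fun hh => h1 ((ZMod.val_eq_zero _).1 hh)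
  have hvm : (c - a).val ≠ m := fun hh => hcm (by
    have := ZMod.natCast_rightInverse (c - a); rw [← this, hh])
  omega

lemma cast_eq_cast_iff {x y : ℕ} (hx : x < n) (hy : y < n) :
    ((x : ZMod n) = (y : ZMod n)) ↔ x = y := by
  constructor
  · intro h
    have := congrArg ZMod.val h
    rwa [ZMod.val_cast_of_lt hx, ZMod.val_cast_of_lt hy] at this
  · intro h; rw [h]

lemma sub_val_cast {a : ZMod n} {v : ℕ} (hv : v < n) : (a + (v:ZMod n) - a).val = v := by
  have : a + (v:ZMod n) - a = (v:ZMod n) := by ring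
  rw [this, ZMod.val_cast_of_lt hv]

/-- nat identity relating the two end-shifts -/
lemma AB_rel {k : ℕ} (h1 : 1 ≤ k) (h2 : k + 1 ≤ m) :
    k + Bval m k = Aval m k ∨ k + Bval m k = 2*m + Aval m k := by
  unfold Aval Bval
  rcases Nat.even_or_odd k with he | ho
  · have : k % 2 = 0 := Nat.even_iff.1 he
    rw [if_neg (by omega), if_neg (by omega)]
    right; omega
  · have : k % 2 = 1 := Nat.odd_iff.1 ho
    rw [if_pos this, if_pos this]
    left; omega

lemma Aval_lt {k : ℕ} (h1 : 1 ≤ k) (h2 : k + 1 ≤ m) : Aval m k < 2*m := by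
  unfold Aval; split_ifs <;> omega

lemma Bval_lt {k : ℕ} (h1 : 1 ≤ k) (h2 : k + 1 ≤ m) : Bval m k < 2*m := by
  unfold Bval; split_ifs <;> omega

/-- the shift at the canonical end -/
lemma scol_sub_left (hm : n = 2*m) {a c : ZMod n} (hca : c ≠ a)
    (hcm : c - a ≠ ((m:ℕ) : ZMod n)) (hlt : (c - a).val < m) :
    (scol m a c - a).val = Aval m (c - a).val := by
  obtain ⟨hk1, hk2⟩ := kfacts hm hca hcm hlt
  rw [scol, if_pos hlt]
  refine sub_val_cast ?_
  have := Aval_lt (m := m) hk1 (by omega)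
  omega

/-- the shift at the non-canonical end -/
lemma scol_sub_right (hm : n = 2*m) {a c : ZMod n} (hca : c ≠ a)
    (hcm : c - a ≠ ((m:ℕ) : ZMod n)) (hlt : (c - a).val < m) :
    (scol m a c - c).val = Bval m (c - a).val := by
  obtain ⟨hk1, hk2⟩ := kfacts hm hca hcm hlt
  have hcast : (((c - a).val : ℕ) : ZMod n) = c - a := ZMod.natCast_rightInverse (c - a)
  have key : scol m a c - c = ((Bval m (c - a).val : ℕ) : ZMod n) := by
    rw [scol, if_pos hlt]
    have expand : a + ((Aval m (c - a).val : ℕ) : ZMod n) - c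
        = ((Aval m (c - a).val : ℕ) : ZMod n) - (((c - a).val : ℕ) : ZMod n) := by
      rw [hcast]; ring
    rw [expand]
    rcases AB_rel (m := m) hk1 (by omega) with h | h
    · have h2 := congrArg (fun z : ℕ => (z : ZMod n)) h
      push_cast at h2 ⊢
      linear_combination -h2
    · have h2 := congrArg (fun z : ℕ => (z : ZMod n)) h
      have hz : ((2*m : ℕ) : ZMod n) = 0 := by rw [← hm]; exact ZMod.natCast_self n
      push_cast at h2 hz ⊢
      linear_combination -h2 - hz
  rw [key]
  refine ZMod.val_cast_of_lt ?_
  have := Bval_lt (m := m) hk1 (by omega)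
  omega

lemma scol_symm (hm : n = 2*m) {a c : ZMod n} (hca : c ≠ a)
    (hcm : c - a ≠ ((m:ℕ) : ZMod n)) : scol m a c = scol m c a := by
  have hsum := val_sub_add_val hca
  have hm' : a - c ≠ ((m:ℕ) : ZMod n) := by
    intro h
    apply hcm
    have h2 : c - a = -((m:ℕ) : ZMod n) := by rw [← h]; ring
    have : ((m:ℕ) : ZMod n) = -((m:ℕ) : ZMod n) := by
      have hz : ((2*m : ℕ) : ZMod n) = 0 := by rw [← hm]; exact ZMod.natCast_self n
      push_cast at hz ⊢
      linear_combination hz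
    rw [h2, ← this]
  have hvm : (c - a).val ≠ m := fun hh => hcm (by
    have h3 := ZMod.natCast_rightInverse (c - a); rw [← h3, hh])
  have hv : (c - a).val ≠ 0 := fun hh => (sub_ne_zero.2 hca) ((ZMod.val_eq_zero _).1 hh)
  rcases Nat.lt_or_ge (c - a).val m with hlt | hge
  · have hgt : ¬ (a - c).val < m := by omega
    rw [scol, scol, if_pos hlt, if_neg hgt]
  · have hlt' : (a - c).val < m := by omega
    rw [scol, scol, if_neg (by omega), if_pos hlt']

end gadget
end ImmProof
namespace ImmProof
section gadget2
variable {n : ℕ} [NeZero n] {m : ℕ}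

lemma scol_ne_zero_val {v : ℕ} {a w : ZMod n} (h : (w - a).val = v) (hv : 1 ≤ v) :
    w ≠ a := by
  intro hh
  rw [hh] at h
  simp at h
  omega

lemma scol_pack (hm : n = 2*m) {a c : ZMod n} (hca : c ≠ a)
    (hcm : c - a ≠ ((m : ℕ) : ZMod n)) :
    scol m a c ≠ a ∧
    pdec m a (scol m a c) = c ∧
    (scol m a c - a).val ≠ dlt m ∧ 1 ≤ (scol m a c - a).val ∧
    ((scol m a c - a).val = m + 1 → c = a + 1) ∧
    ((scol m a c - a).val = m → a = c + 1) := by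
  have hcast : (((c - a).val : ℕ) : ZMod n) = c - a := ZMod.natCast_rightInverse (c - a)
  have hacast : (((a - c).val : ℕ) : ZMod n) = a - c := ZMod.natCast_rightInverse (a - c)
  have hsum := val_sub_add_val hca
  have hv0 : (c - a).val ≠ 0 := fun hh => (sub_ne_zero.2 hca) ((ZMod.val_eq_zero _).1 hh)
  have hvm : (c - a).val ≠ m := fun hh => hcm (by rw [← hcast, hh])
  rcases Nat.lt_or_ge (c - a).val m with hlt | hge
  · -- canonical case
    obtain ⟨hk1, hk2⟩ := kfacts hm hca hcm hlt
    have hval := scol_sub_left hm hca hcm hlt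
    have hform : scol m a c = a + ((Aval m (c-a).val : ℕ) : ZMod n) := by
      rw [scol, if_pos hlt]
    set k := (c - a).val with hkdef
    have hA1 : 1 ≤ Aval m k := by unfold Aval; split_ifs <;> omega
    refine ⟨scol_ne_zero_val hval (by omega), ?_, ?_, by omega, ?_, ?_⟩
    · rw [pdec, hval]
      rcases Nat.even_or_odd k with he | ho
      · have hk2' : k % 2 = 0 := Nat.even_iff.1 he
        have hcond : Aval m k ≤ (m-1)/2 := by unfold Aval; rw [if_neg (by omega)]; omega
        rw [if_pos (Or.inl hcond)]
        have h2A : 2 * Aval m k = k := by unfold Aval; rw [if_neg (by omega)]; omega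
        have hc2 := congrArg (fun z : ℕ => (z : ZMod n)) h2A
        push_cast at hc2
        linear_combination 2*hform + hc2 + hcast
      · have hk2' : k % 2 = 1 := Nat.odd_iff.1 ho
        have hAv : Aval m k = m + 1 + (k-1)/2 := by unfold Aval; rw [if_pos hk2']
        have hcond : ¬ (Aval m k ≤ (m-1)/2 ∨ n - (m-1)/2 ≤ Aval m k) := by
          rw [hAv]; omega
        rw [if_neg hcond]
        have h2A : 2 * Aval m k = 2*m + k + 1 := by rw [hAv]; omega
        have hc2 := congrArg (fun z : ℕ => (z : ZMod n)) h2A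
        have hz : ((2*m : ℕ) : ZMod n) = 0 := by rw [← hm]; exact ZMod.natCast_self n
        push_cast at hc2 hz
        linear_combination 2*hform + hc2 + hz + hcast
    · rw [hval]; unfold Aval dlt; split_ifs <;> omega
    · rw [hval]
      intro hA
      have hk1' : k = 1 := by unfold Aval at hA; split_ifs at hA <;> omega
      have : c - a = ((1:ℕ) : ZMod n) := by rw [← hcast, hk1']
      push_cast at this
      linear_combination this
    · rw [hval]
      intro hA
      exfalso
      unfold Aval at hA; split_ifs at hA <;> omega
  · -- non-canonical case
    have hlt' : (a - c).val < m := by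
      have := (c - a).val_lt
      omega
    have hv0' : (a - c).val ≠ 0 := fun hh => (sub_ne_zero.2 hca.symm) ((ZMod.val_eq_zero _).1 hh)
    have hvm' : (a - c).val ≠ m := by omega
    have hcm' : a - c ≠ ((m : ℕ) : ZMod n) := fun hh => hvm' (by rw [hh, ZMod.val_cast_of_lt (by omega)])
    obtain ⟨hk1, hk2⟩ := kfacts hm hca.symm hcm' hlt'
    have hsymm := scol_symm hm hca hcm
    have hval : (scol m a c - a).val = Bval m (a - c).val := by
      rw [hsymm]; exact scol_sub_right hm hca.symm hcm' hlt'
    have hform : scol m a c = c + ((Aval m (a-c).val : ℕ) : ZMod n) := by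
      rw [hsymm, scol, if_pos hlt']
    set k := (a - c).val with hkdef
    have hB1 : 1 ≤ Bval m k := by unfold Bval; split_ifs <;> omega
    refine ⟨scol_ne_zero_val hval (by omega), ?_, ?_, by omega, ?_, ?_⟩
    · rw [pdec, hval]
      rcases Nat.even_or_odd k with he | ho
      · have hk2' : k % 2 = 0 := Nat.even_iff.1 he
        have hBv : Bval m k = 2*m - k/2 := by unfold Bval; rw [if_neg (by omega)]
        have hcond : n - (m-1)/2 ≤ Bval m k := by rw [hBv]; omega
        rw [if_pos (Or.inr hcond)]
        have h2A : 2 * Aval m k = k := by unfold Aval; rw [if_neg (by omega)]; omega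
        have hc2 := congrArg (fun z : ℕ => (z : ZMod n)) h2A
        push_cast at hc2
        linear_combination 2*hform + hc2 + hacast
      · have hk2' : k % 2 = 1 := Nat.odd_iff.1 ho
        have hBv : Bval m k = m - (k-1)/2 := by unfold Bval; rw [if_pos hk2']
        have hcond : ¬ (Bval m k ≤ (m-1)/2 ∨ n - (m-1)/2 ≤ Bval m k) := by
          rw [hBv]; omega
        rw [if_neg hcond]
        have h2A : 2 * Aval m k = 2*m + k + 1 := by
          unfold Aval; rw [if_pos hk2']; omega
        have hc2 := congrArg (fun z : ℕ => (z : ZMod n)) h2A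
        have hz : ((2*m : ℕ) : ZMod n) = 0 := by rw [← hm]; exact ZMod.natCast_self n
        push_cast at hc2 hz
        linear_combination 2*hform + hc2 + hz + hacast
    · rw [hval]; unfold Bval dlt; split_ifs <;> omega
    · rw [hval]
      intro hB
      exfalso
      unfold Bval at hB; split_ifs at hB <;> omega
    · rw [hval]
      intro hB
      have hk1' : k = 1 := by unfold Bval at hB; split_ifs at hB <;> omega
      have : a - c = ((1:ℕ) : ZMod n) := by rw [← hacast, hk1']
      push_cast at this
      linear_combination this

end gadget2
end ImmProof
namespace ImmProof
open SimpleGraph Walk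

section S4
variable {p : ℕ} [NeZero p]

lemma cast_m_ne_zero {m : ℕ} (hm : p = 2*m) (hm1 : 1 ≤ m) : ((m:ℕ) : ZMod p) ≠ 0 := by
  intro h
  have := congrArg ZMod.val h
  rw [ZMod.val_cast_of_lt (by omega), ZMod.val_zero] at this
  omega

lemma cast_dlt_ne_zero {m : ℕ} (hm : p = 2*m) (hm1 : 1 ≤ m) : ((dlt m : ℕ) : ZMod p) ≠ 0 := by
  intro h
  have := congrArg ZMod.val h
  rw [ZMod.val_cast_of_lt (by unfold dlt; omega), ZMod.val_zero] at this
  unfold dlt at this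
  omega

lemma two_cast_m {m : ℕ} (hm : p = 2*m) : ((m:ℕ) : ZMod p) + ((m:ℕ) : ZMod p) = 0 := by
  have : (((2*m : ℕ)) : ZMod p) = 0 := by rw [← hm]; exact ZMod.natCast_self p
  push_cast at this
  linear_combination this

/-- shift by dlt has the right val -/
lemma dlt_shift_val {m : ℕ} (hm : p = 2*m) (hm1 : 1 ≤ m) (a : ZMod p) :
    (a + ((dlt m : ℕ) : ZMod p) - a).val = dlt m :=
  sub_val_cast (by unfold dlt; omega)

def F4 {m : ℕ} (u v : Fin (p+1) × Fin 2) : Sym2 (Idx p 1) :=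
  match catOf u, catOf v with
  | .g a b, .g c d => s(some (a, b), some (c, d))
  | .g a b, .C => s(some (a, b), none)
  | .C, .g a b => s(some (a, b), none)
  | .g a b, .R x =>
      if (x - a).val = dlt m then s(some (a, b), some (a + ((m:ℕ) : ZMod p), b))
      else s(some (a, b), some (pdec m a x, b))
  | .R x, .g a b =>
      if (x - a).val = dlt m then s(some (a, b), some (a + ((m:ℕ) : ZMod p), b))
      else s(some (a, b), some (pdec m a x, b))
  | .T _, .R x => s(some (x - ((dlt m : ℕ) : ZMod p), 0), some (x - ((dlt m : ℕ) : ZMod p) + ((m:ℕ) : ZMod p), 0))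
  | .R x, .T _ => s(some (x - ((dlt m : ℕ) : ZMod p), 0), some (x - ((dlt m : ℕ) : ZMod p) + ((m:ℕ) : ZMod p), 0))
  | _, _ => s(none, none)

def S4walk (m : ℕ) (hm : p = 2*m) (hm1 : 1 ≤ m) (i j : Idx p 1) (h : i ≠ j) :
    (KK p 1).Walk (φ0 i) (φ0 j) :=
  match i, j, h with
  | none, none, h => absurd rfl h
  | none, some (a, b), _ => W1 adj_gC.symm
  | some (a, b), none, _ => W1 adj_gC
  | some (a, b), some (c, d), h =>
    if hac : a = c then
      absurd (by rw [hac, Subsingleton.elim b d]) h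
    else if hMc : c - a = ((m:ℕ) : ZMod p) then
      -- M-pair : 4-path through Tv 0
      W4 (adj_gR (x := a + ((dlt m : ℕ) : ZMod p)) (b := b) (by
            intro hh
            exact cast_dlt_ne_zero hm hm1 (by linear_combination hh)))
        ((adj_TR (y := (0 : ZMod 1)) (x := a + ((dlt m : ℕ) : ZMod p))).symm)
        (adj_TR (y := (0 : ZMod 1)) (x := c + ((dlt m : ℕ) : ZMod p)))
        ((adj_gR (x := c + ((dlt m : ℕ) : ZMod p)) (b := d) (by
            intro hh
            exact cast_dlt_ne_zero hm hm1 (by linear_combination hh))).symm)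
    else
      have hca : c ≠ a := fun hh => hac hh.symm
      have hMc2 : a - c ≠ ((m:ℕ) : ZMod p) := fun hh =>
        hMc (by linear_combination - hh - (two_cast_m hm))
      have pk := scol_pack hm hca hMc
      have hnc : scol m a c ≠ c := by
        rw [scol_symm hm hca hMc]
        exact (scol_pack hm (a := c) (c := a) (fun hh => hac hh) hMc2).1
      W2 (adj_gR pk.1) ((adj_gR hnc).symm)

lemma S4_path (m : ℕ) (hm : p = 2*m) (hm1 : 1 ≤ m) :
    ∀ i j h, (S4walk m hm hm1 i j h).IsPath := by
  intro i j h
  match i, j with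
  | none, none => exact absurd rfl h
  | none, some (a, b) => exact W1_path _
  | some (a, b), none => exact W1_path _
  | some (a, b), some (c, d) =>
    rw [S4walk]
    split_ifs with hac hMc
    · exact absurd (by rw [hac, Subsingleton.elim b d]) h
    · refine W4_path _ _ _ _ gV_ne_Tv gV_ne_Rv (gV_ne_gV_left hac) ?_ ?_ ?_
      · intro hh
        have h2 := Rv_inj hh
        exact hac (by linear_combination h2)
      · exact fun hh => gV_ne_Rv hh.symm
      · exact fun hh => gV_ne_Tv hh.symm
    · exact W2_path _ _ (gV_ne_gV_left hac)

end S4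
end ImmProof
namespace ImmProof
open SimpleGraph Walk

section S4b
variable {p : ℕ} [NeZero p]

lemma S4_label (m : ℕ) (hm : p = 2*m) (hm1 : 1 ≤ m) :
    ∀ i j h, ∀ d ∈ (S4walk m hm hm1 i j h).darts,
      F4 (m := m) d.toProd.1 d.toProd.2 = s(i, j) ∧
      F4 (m := m) d.toProd.2 d.toProd.1 = s(i, j) := by
  intro i j h dt hd
  match i, j with
  | none, none => exact absurd rfl h
  | none, some (a, b) =>
    rw [S4walk] at hd; erw [W1_darts, List.mem_singleton] at hd
    subst hd
    exact ⟨by simp only [F4, φ0, catOf_cnr, catOf_gV]; exact Sym2.eq_swap,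
      by simp only [F4, φ0, catOf_cnr, catOf_gV]; exact Sym2.eq_swap⟩
  | some (a, b), none =>
    rw [S4walk] at hd; erw [W1_darts, List.mem_singleton] at hd
    subst hd
    exact ⟨by simp only [F4, φ0, catOf_cnr, catOf_gV],
      by simp only [F4, φ0, catOf_cnr, catOf_gV]⟩
  | some (a, b), some (c, d) =>
    obtain rfl : b = 0 := Subsingleton.elim b 0
    obtain rfl : d = 0 := Subsingleton.elim d 0
    rw [S4walk] at hd
    split_ifs at hd with hac hMc
    · exact absurd (by rw [hac]) h
    · -- M-pair 4-path
      have hca : c = a + ((m:ℕ) : ZMod p) := by linear_combination hMc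
      have hcma : c + ((m:ℕ) : ZMod p) = a := by
        linear_combination hMc + (two_cast_m hm)
      erw [W4_darts] at hd
      simp only [List.mem_cons, List.not_mem_nil, or_false] at hd
      have e1 : a + ((dlt m : ℕ) : ZMod p) - ((dlt m : ℕ) : ZMod p) = a := by ring
      have e2 : c + ((dlt m : ℕ) : ZMod p) - ((dlt m : ℕ) : ZMod p) = c := by ring
      rcases hd with rfl | rfl | rfl | rfl
      · constructor <;>
        · simp only [F4, φ0, catOf_gV, catOf_Rv]
          rw [if_pos (dlt_shift_val hm hm1 a), ← hca]
      · constructor <;>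
        · simp only [F4, φ0, catOf_Rv, catOf_Tv]
          rw [e1, ← hca]
      · constructor <;>
        · simp only [F4, φ0, catOf_Rv, catOf_Tv]
          rw [e2, hcma]
          exact Sym2.eq_swap
      · constructor <;>
        · simp only [F4, φ0, catOf_gV, catOf_Rv]
          rw [if_pos (dlt_shift_val hm hm1 c), hcma]
          exact Sym2.eq_swap
    · -- 2R pair
      have hca : c ≠ a := fun hh => hac hh.symm
      have hMc2 : a - c ≠ ((m:ℕ) : ZMod p) := fun hh =>
        hMc (by linear_combination - hh - (two_cast_m hm))
      have pk := scol_pack hm hca hMc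
      have pk2 := scol_pack hm (a := c) (c := a) (fun hh => hac hh) hMc2
      have hsymm := scol_symm hm hca hMc
      erw [W2_darts] at hd
      simp only [List.mem_cons, List.not_mem_nil, or_false] at hd
      rcases hd with rfl | rfl
      · constructor <;>
        · simp only [F4, φ0, catOf_gV, catOf_Rv]
          rw [if_neg (by
            intro hh
            exact pk.2.2.1 hh), pk.2.1]
      · constructor <;>
        · simp only [F4, φ0, catOf_gV, catOf_Rv]
          rw [if_neg (by
            rw [hsymm]
            intro hh
            exact pk2.2.2.1 hh)]
          rw [hsymm, pk2.2.1]
          exact Sym2.eq_swap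

theorem schemeS4 (hp : p % 2 = 0) : HasCliqueImmersion (KK p 1) (p * 1 + 1) := by
  have hp0 := NeZero.ne p
  have hm : p = 2 * (p/2) := by omega
  have hm1 : 1 ≤ p/2 := by omega
  have := glue (KK p 1) φ0 φ0_inj (F4 (m := p/2)) (S4walk (p/2) hm hm1)
    (S4_path (p/2) hm hm1) (S4_label (p/2) hm hm1)
  rwa [card_Idx] at this

end S4b
end ImmProof
namespace ImmProof
open SimpleGraph Walk

section S2
variable {p q : ℕ} [NeZero p] [NeZero q]

lemma one_ne_zero' (h2 : 2 ≤ q) : (1 : ZMod q) ≠ 0 := by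
  haveI : Fact (1 < q) := ⟨by omega⟩
  exact one_ne_zero

lemma iv_ne_zero (hq : q % 2 = 1) (h3 : 3 ≤ q) : iv q ≠ 0 := by
  intro h
  have h2 := two_iv (n := q) hq
  rw [h, mul_zero] at h2
  exact one_ne_zero' (by omega) h2.symm

lemma neg_iv_ne_iv (hq : q % 2 = 1) (h3 : 3 ≤ q) : - iv q ≠ iv q := by
  intro h
  have h2 := two_iv (n := q) hq
  apply one_ne_zero' (q := q) (by omega)
  linear_combination - h - h2

lemma ciq_cancel (hι : (2 : ZMod q) * iv q = 1) {x y : ZMod q}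
    (h : x * iv q = y * iv q) : x = y := by
  linear_combination 2*h - x*hι + y*hι

/-- ownership function for scheme S2 (p even, q odd ≥ 3) -/
def F2 (m : ℕ) (u v : Fin (p+1) × Fin (q+1)) : Sym2 (Idx p q) :=
  match catOf u, catOf v with
  | .g a b, .g c d => s(some (a, b), some (c, d))
  | .g a b, .C => s(some (a, b), none)
  | .C, .g a b => s(some (a, b), none)
  | .g a b, .T y =>
      if y - b = iv q then s(some (a, b - 1), some (a, b))
      else if y - b = - iv q then s(some (a, b), some (a + ((m:ℕ) : ZMod p), b))
      else s(some (a, b), some (a, 2*y - b))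
  | .T y, .g a b =>
      if y - b = iv q then s(some (a, b - 1), some (a, b))
      else if y - b = - iv q then s(some (a, b), some (a + ((m:ℕ) : ZMod p), b))
      else s(some (a, b), some (a, 2*y - b))
  | .g a b, .R x =>
      if (x - a).val = dlt m then s(some (a, b), some (a, b + 1))
      else s(some (a, b), some (pdec m a x, b))
  | .R x, .g a b =>
      if (x - a).val = dlt m then s(some (a, b), some (a, b + 1))
      else s(some (a, b), some (pdec m a x, b))
  | .T y, .R x => s(some (x - ((dlt m : ℕ) : ZMod p), y - iv q - 1), some (x - ((dlt m : ℕ) : ZMod p), y - iv q))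
  | .R x, .T y => s(some (x - ((dlt m : ℕ) : ZMod p), y - iv q - 1), some (x - ((dlt m : ℕ) : ZMod p), y - iv q))
  | _, _ => s(none, none)

def S2walk (m : ℕ) (hm : p = 2*m) (hm1 : 1 ≤ m) (hq2 : q % 2 = 1) (hq3 : 3 ≤ q)
    (i j : Idx p q) (h : i ≠ j) : (KK p q).Walk (φ0 i) (φ0 j) :=
  match i, j, h with
  | none, none, h => absurd rfl h
  | none, some (a, b), _ => W1 adj_gC.symm
  | some (a, b), none, _ => W1 adj_gC
  | some (a, b), some (c, d), h =>
    if hac : a = c then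
      -- row pair
      if hsucc : d = b + 1 then
        W3 (adj_gR (a := a) (x := a + ((dlt m : ℕ) : ZMod p)) (b := b)
            (fun hh => cast_dlt_ne_zero hm hm1 (by linear_combination hh)))
          ((adj_TR (y := d + iv q) (x := a + ((dlt m : ℕ) : ZMod p))).symm)
          ((adj_gT (a := c) (b := d) (y := d + iv q)
            (fun hh => iv_ne_zero hq2 hq3 (by linear_combination hh))).symm)
      else if hsucc' : b = d + 1 then
        W3 (adj_gT (a := a) (b := b) (y := b + iv q)
            (fun hh => iv_ne_zero hq2 hq3 (by linear_combination hh)))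
          (adj_TR (y := b + iv q) (x := a + ((dlt m : ℕ) : ZMod p)))
          ((adj_gR (a := c) (b := d) (x := a + ((dlt m : ℕ) : ZMod p))
            (fun hh => cast_dlt_ne_zero hm hm1 (by linear_combination hh - hac))).symm)
      else
        have hbd : b ≠ d := fun he => h (by rw [hac, he])
        W2 (adj_gT (ciq_ne_left (two_iv hq2) hbd))
          ((adj_gT (ciq_ne_right (two_iv hq2) hbd)).symm)
    else if hbd : b = d then
      -- column pair
      if hMc : c - a = ((m:ℕ) : ZMod p) then
        W2 (adj_gT (a := a) (b := b) (y := b - iv q)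
            (fun hh => iv_ne_zero hq2 hq3 (by linear_combination - hh)))
          ((adj_gT (a := c) (b := d) (y := b - iv q)
            (fun hh => iv_ne_zero hq2 hq3 (by linear_combination hbd - hh))).symm)
      else
        have hca : c ≠ a := fun hh => hac hh.symm
        have hMc2 : a - c ≠ ((m:ℕ) : ZMod p) := fun hh =>
          hMc (by linear_combination - hh - (two_cast_m hm))
        have pk := scol_pack hm hca hMc
        have hnc : scol m a c ≠ c := by
          rw [scol_symm hm hca hMc]
          exact (scol_pack hm (a := c) (c := a) (fun hh => hac hh) hMc2).1
        W2 (adj_gR pk.1) ((adj_gR hnc).symm)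
    else W1 (adj_gg hac hbd)

end S2
end ImmProof
namespace ImmProof
open SimpleGraph Walk

section S2b
variable {p q : ℕ} [NeZero p] [NeZero q]

lemma S2_label (m : ℕ) (hm : p = 2*m) (hm1 : 1 ≤ m) (hq2 : q % 2 = 1) (hq3 : 3 ≤ q) :
    ∀ i j h, ∀ dt ∈ (S2walk m hm hm1 hq2 hq3 i j h).darts,
      F2 m dt.toProd.1 dt.toProd.2 = s(i, j) ∧
      F2 m dt.toProd.2 dt.toProd.1 = s(i, j) := by
  intro i j h dt hd
  have hι := two_iv (n := q) hq2
  match i, j with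
  | none, none => exact absurd rfl h
  | none, some (a, b) =>
    rw [S2walk] at hd; erw [W1_darts, List.mem_singleton] at hd
    subst hd
    exact ⟨by simp only [F2, φ0, catOf_cnr, catOf_gV]; exact Sym2.eq_swap,
      by simp only [F2, φ0, catOf_cnr, catOf_gV]; exact Sym2.eq_swap⟩
  | some (a, b), none =>
    rw [S2walk] at hd; erw [W1_darts, List.mem_singleton] at hd
    subst hd
    exact ⟨by simp only [F2, φ0, catOf_cnr, catOf_gV],
      by simp only [F2, φ0, catOf_cnr, catOf_gV]⟩
  | some (a, b), some (c, d) =>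
    rw [S2walk] at hd
    split_ifs at hd with hac hsucc hsucc' hbd hMc
    · -- row pair, succ 3-path
      subst hac hsucc
      erw [W3_darts] at hd
      simp only [List.mem_cons, List.not_mem_nil, or_false] at hd
      rcases hd with rfl | rfl | rfl
      · constructor <;>
        · simp only [F2, φ0, catOf_gV, catOf_Rv]
          rw [if_pos (dlt_shift_val hm hm1 a)]
      · constructor <;>
        · simp only [F2, φ0, catOf_Rv, catOf_Tv]
          rw [show a + ((dlt m : ℕ) : ZMod p) - ((dlt m : ℕ) : ZMod p) = a from by ring,
            show b + 1 + iv q - iv q - 1 = b from by ring,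
            show b + 1 + iv q - iv q = b + 1 from by ring]
      · constructor <;>
        · simp only [F2, φ0, catOf_gV, catOf_Tv]
          rw [if_pos (show b + 1 + iv q - (b + 1) = iv q from by ring),
            show b + 1 - 1 = b from by ring]
    · -- row pair, reverse succ 3-path
      subst hac
      erw [W3_darts] at hd
      simp only [List.mem_cons, List.not_mem_nil, or_false] at hd
      rcases hd with rfl | rfl | rfl
      · constructor <;>
        · simp only [F2, φ0, catOf_gV, catOf_Tv]
          rw [if_pos (show b + iv q - b = iv q from by ring), hsucc',
            show d + 1 - 1 = d from by ring]
          exact Sym2.eq_swap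
      · constructor <;>
        · simp only [F2, φ0, catOf_Rv, catOf_Tv]
          rw [show a + ((dlt m : ℕ) : ZMod p) - ((dlt m : ℕ) : ZMod p) = a from by ring,
            hsucc', show d + 1 + iv q - iv q - 1 = d from by ring,
            show d + 1 + iv q - iv q = d + 1 from by ring, ← hsucc']
          exact Sym2.eq_swap
      · constructor <;>
        · simp only [F2, φ0, catOf_gV, catOf_Rv]
          rw [if_pos (dlt_shift_val hm hm1 a), ← hsucc']
          exact Sym2.eq_swap
    · -- row pair, 2T
      subst hac
      erw [W2_darts] at hd
      simp only [List.mem_cons, List.not_mem_nil, or_false] at hd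
      have hne1 : ¬ ((b + d) * iv q - b = iv q) := by
        intro hh
        exact hsucc (by linear_combination 2*hh + (1 - b - d)*hι)
      have hne2 : ¬ ((b + d) * iv q - b = - iv q) := by
        intro hh
        exact hsucc' (by linear_combination -2*hh + (b + d + 1)*hι)
      have hne3 : ¬ ((b + d) * iv q - d = iv q) := by
        intro hh
        exact hsucc' (by linear_combination 2*hh + (1 - b - d)*hι)
      have hne4 : ¬ ((b + d) * iv q - d = - iv q) := by
        intro hh
        exact hsucc (by linear_combination -2*hh + (b + d + 1)*hι)
      have hm1' : 2*((b + d) * iv q) - b = d := by linear_combination (b + d) * hι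
      have hm2' : 2*((b + d) * iv q) - d = b := by linear_combination (b + d) * hι
      rcases hd with rfl | rfl
      · constructor <;>
        · simp only [F2, φ0, catOf_gV, catOf_Tv]
          rw [if_neg hne1, if_neg hne2, hm1']
      · constructor <;>
        · simp only [F2, φ0, catOf_gV, catOf_Tv]
          rw [if_neg hne3, if_neg hne4, hm2']
          exact Sym2.eq_swap
    · -- column pair, colM 2T
      subst hbd
      erw [W2_darts] at hd
      simp only [List.mem_cons, List.not_mem_nil, or_false] at hd
      have hmc1 : a + ((m:ℕ) : ZMod p) = c := by linear_combination - hMc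
      have hmc2 : c + ((m:ℕ) : ZMod p) = a := by linear_combination hMc + (two_cast_m hm)
      have hneg : ¬ (b - iv q - b = iv q) := by
        intro hh
        exact neg_iv_ne_iv hq2 hq3 (by linear_combination hh)
      have hpos : b - iv q - b = - iv q := by ring
      rcases hd with rfl | rfl
      · constructor <;>
        · simp only [F2, φ0, catOf_gV, catOf_Tv]
          rw [if_neg hneg, if_pos hpos, hmc1]
      · constructor <;>
        · simp only [F2, φ0, catOf_gV, catOf_Tv]
          rw [if_neg hneg, if_pos hpos, hmc2]
          exact Sym2.eq_swap
    · -- column pair, 2R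
      subst hbd
      have hca : c ≠ a := fun hh => hac hh.symm
      have hMc2 : a - c ≠ ((m:ℕ) : ZMod p) := fun hh =>
        hMc (by linear_combination - hh - (two_cast_m hm))
      have pk := scol_pack hm hca hMc
      have pk2 := scol_pack hm (a := c) (c := a) (fun hh => hac hh) hMc2
      have hsymm := scol_symm hm hca hMc
      erw [W2_darts] at hd
      simp only [List.mem_cons, List.not_mem_nil, or_false] at hd
      rcases hd with rfl | rfl
      · constructor <;>
        · simp only [F2, φ0, catOf_gV, catOf_Rv]
          rw [if_neg (fun hh => pk.2.2.1 hh), pk.2.1]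
      · constructor <;>
        · simp only [F2, φ0, catOf_gV, catOf_Rv]
          rw [if_neg (by rw [hsymm]; exact fun hh => pk2.2.2.1 hh)]
          rw [hsymm, pk2.2.1]
          exact Sym2.eq_swap
    · -- general position
      erw [W1_darts, List.mem_singleton] at hd
      subst hd
      exact ⟨by simp only [F2, φ0, catOf_gV],
        by simp only [F2, φ0, catOf_gV]; exact Sym2.eq_swap⟩

end S2b
end ImmProof
namespace ImmProof
open SimpleGraph Walk

section S2c
variable {p q : ℕ} [NeZero p] [NeZero q]

lemma S2_path (m : ℕ) (hm : p = 2*m) (hm1 : 1 ≤ m) (hq2 : q % 2 = 1) (hq3 : 3 ≤ q) :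
    ∀ i j h, (S2walk m hm hm1 hq2 hq3 i j h).IsPath := by
  intro i j h
  match i, j with
  | none, none => exact absurd rfl h
  | none, some (a, b) => exact W1_path _
  | some (a, b), none => exact W1_path _
  | some (a, b), some (c, d) =>
    rw [S2walk]
    split_ifs with hac hsucc hsucc' hbd hMc
    · subst hac hsucc
      refine W3_path _ _ _ gV_ne_Tv (gV_ne_gV_right ?_) (fun hh => gV_ne_Rv hh.symm)
      intro hh
      exact one_ne_zero' (q := q) (by omega) (by linear_combination - hh)
    · subst hac
      refine W3_path _ _ _ gV_ne_Rv (gV_ne_gV_right ?_) (fun hh => gV_ne_Tv hh.symm)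
      intro hh
      rw [hsucc'] at hh
      exact one_ne_zero' (q := q) (by omega) (by linear_combination hh)
    · subst hac
      exact W2_path _ _ (gV_ne_gV_right (fun he => h (by rw [he])))
    · subst hbd
      exact W2_path _ _ (gV_ne_gV_left hac)
    · subst hbd
      exact W2_path _ _ (gV_ne_gV_left hac)
    · exact W1_path _

theorem schemeS2 (hp : p % 2 = 0) (hq : q % 2 = 1) (hq3 : 3 ≤ q) :
    HasCliqueImmersion (KK p q) (p * q + 1) := by
  have hp0 := NeZero.ne p
  have hm : p = 2 * (p/2) := by omega
  have hm1 : 1 ≤ p/2 := by omega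
  have := glue (KK p q) φ0 φ0_inj (F2 (p/2)) (S2walk (p/2) hm hm1 hq hq3)
    (S2_path (p/2) hm hm1 hq hq3) (S2_label (p/2) hm hm1 hq hq3)
  rwa [card_Idx] at this

end S2c
end ImmProof
namespace ImmProof
open SimpleGraph Walk

section S3
variable {p q : ℕ} [NeZero p] [NeZero q]

lemma val_add_one_parity {mq : ℕ} (hq : q = 2*mq) (hq1 : 1 ≤ mq) (b : ZMod q) :
    ((b + 1 : ZMod q)).val % 2 = (b.val + 1) % 2 := by
  have h1 : (1 : ZMod q).val = 1 := by
    haveI : Fact (1 < q) := ⟨by omega⟩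
    exact ZMod.val_one q
  have h2 := ZMod.val_add b 1
  rw [h1] at h2
  have h3 := b.val_lt
  rcases Nat.lt_or_ge (b.val + 1) q with hlt | hge
  · rw [h2, Nat.mod_eq_of_lt hlt]
  · have : b.val + 1 = q := by omega
    rw [h2, this, Nat.mod_self]
    omega

/-- parity-based special column shift -/
def piq (mq : ℕ) (b : ZMod q) : ZMod q :=
  if b.val % 2 = 0 then ((mq + 1 : ℕ) : ZMod q) else ((mq : ℕ) : ZMod q)

lemma piq_shift_val {mq : ℕ} (hq : q = 2*mq) (hq2 : 2 ≤ mq) (b : ZMod q) :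
    (b + piq mq b - b).val = if b.val % 2 = 0 then mq + 1 else mq := by
  unfold piq
  split_ifs with hb
  · exact sub_val_cast (by omega)
  · exact sub_val_cast (by omega)

lemma piq_ne_zero {mq : ℕ} (hq : q = 2*mq) (hq2 : 2 ≤ mq) (b : ZMod q) :
    b + piq mq b ≠ b := by
  intro hh
  have h2 : (b + piq mq b - b).val = (0 : ZMod q).val := by rw [sub_eq_zero.2 hh]
  rw [piq_shift_val hq hq2, ZMod.val_zero] at h2
  split_ifs at h2 <;> omega

/-- ownership function for scheme S3 (p, q both even, q ≥ 4) -/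
def F3 (mp mq : ℕ) (u v : Fin (p+1) × Fin (q+1)) : Sym2 (Idx p q) :=
  match catOf u, catOf v with
  | .g a b, .g c d => s(some (a, b), some (c, d))
  | .g a b, .C => s(some (a, b), none)
  | .C, .g a b => s(some (a, b), none)
  | .g a b, .T y =>
      if (y - b).val = dlt mq then s(some (a, b), some (a, b + ((mq:ℕ) : ZMod q)))
      else if ((y - b).val = mq + 1 ∧ b.val % 2 = 0) ∨ ((y - b).val = mq ∧ b.val % 2 = 1) then
        s(some (a, b), some (a + ((mp:ℕ) : ZMod p), b))
      else s(some (a, b), some (a, pdec mq b y))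
  | .T y, .g a b =>
      if (y - b).val = dlt mq then s(some (a, b), some (a, b + ((mq:ℕ) : ZMod q)))
      else if ((y - b).val = mq + 1 ∧ b.val % 2 = 0) ∨ ((y - b).val = mq ∧ b.val % 2 = 1) then
        s(some (a, b), some (a + ((mp:ℕ) : ZMod p), b))
      else s(some (a, b), some (a, pdec mq b y))
  | .g a b, .R x =>
      if (x - a).val = dlt mp then
        s(some (a, b), some (a, if b.val % 2 = 0 then b + 1 else b - 1))
      else s(some (a, b), some (pdec mp a x, b))
  | .R x, .g a b =>
      if (x - a).val = dlt mp then
        s(some (a, b), some (a, if b.val % 2 = 0 then b + 1 else b - 1))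
      else s(some (a, b), some (pdec mp a x, b))
  | .T y, .R x =>
      s(some (x, y - ((dlt mq : ℕ) : ZMod q)), some (x, y - ((dlt mq : ℕ) : ZMod q) + ((mq:ℕ) : ZMod q)))
  | .R x, .T y =>
      s(some (x, y - ((dlt mq : ℕ) : ZMod q)), some (x, y - ((dlt mq : ℕ) : ZMod q) + ((mq:ℕ) : ZMod q)))
  | _, _ => s(none, none)

def S3walk (mp mq : ℕ) (hmp : p = 2*mp) (hp1 : 1 ≤ mp) (hmq : q = 2*mq) (hq2 : 2 ≤ mq)
    (i j : Idx p q) (h : i ≠ j) : (KK p q).Walk (φ0 i) (φ0 j) :=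
  match i, j, h with
  | none, none, h => absurd rfl h
  | none, some (a, b), _ => W1 adj_gC.symm
  | some (a, b), none, _ => W1 adj_gC
  | some (a, b), some (c, d), h =>
    if hac : a = c then
      -- row pair
      if hMq : d - b = ((mq:ℕ) : ZMod q) then
        W4 (adj_gT (a := a) (b := b) (y := b + ((dlt mq : ℕ) : ZMod q))
            (fun hh => cast_dlt_ne_zero hmq (by omega) (by linear_combination hh)))
          (adj_TR (y := b + ((dlt mq : ℕ) : ZMod q)) (x := a))
          ((adj_TR (y := d + ((dlt mq : ℕ) : ZMod q)) (x := a)).symm)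
          ((adj_gT (a := c) (b := d) (y := d + ((dlt mq : ℕ) : ZMod q))
            (fun hh => cast_dlt_ne_zero hmq (by omega) (by linear_combination hh))).symm)
      else if hN : d = b + 1 ∧ b.val % 2 = 0 then
        W2 (adj_gR (a := a) (b := b) (x := a + ((dlt mp : ℕ) : ZMod p))
            (fun hh => cast_dlt_ne_zero hmp hp1 (by linear_combination hh)))
          ((adj_gR (a := c) (b := d) (x := a + ((dlt mp : ℕ) : ZMod p))
            (fun hh => cast_dlt_ne_zero hmp hp1 (by linear_combination hh - hac))).symm)
      else if hN' : b = d + 1 ∧ d.val % 2 = 0 then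
        W2 (adj_gR (a := a) (b := b) (x := a + ((dlt mp : ℕ) : ZMod p))
            (fun hh => cast_dlt_ne_zero hmp hp1 (by linear_combination hh)))
          ((adj_gR (a := c) (b := d) (x := a + ((dlt mp : ℕ) : ZMod p))
            (fun hh => cast_dlt_ne_zero hmp hp1 (by linear_combination hh - hac))).symm)
      else
        have hdb : d ≠ b := fun he => h (by rw [hac, he])
        have pk := scol_pack hmq hdb hMq
        have hMq2 : b - d ≠ ((mq:ℕ) : ZMod q) := fun hh =>
          hMq (by linear_combination - hh - (two_cast_m hmq))
        have hnb : scol mq b d ≠ d := by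
          rw [scol_symm hmq hdb hMq]
          exact (scol_pack hmq (a := d) (c := b) (Ne.symm hdb) hMq2).1
        W2 (adj_gT pk.1) ((adj_gT hnb).symm)
    else if hbd : b = d then
      -- column pair
      if hMp : c - a = ((mp:ℕ) : ZMod p) then
        W2 (adj_gT (a := a) (b := b) (y := b + piq mq b) (piq_ne_zero hmq hq2 b))
          ((adj_gT (a := c) (b := d) (y := b + piq mq b)
            (fun hh => piq_ne_zero hmq hq2 b (by rw [← hbd] at hh; exact hh))).symm)
      else
        have hca : c ≠ a := fun hh => hac hh.symm
        have hMp2 : a - c ≠ ((mp:ℕ) : ZMod p) := fun hh =>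
          hMp (by linear_combination - hh - (two_cast_m hmp))
        have pk := scol_pack hmp hca hMp
        have hnc : scol mp a c ≠ c := by
          rw [scol_symm hmp hca hMp]
          exact (scol_pack hmp (a := c) (c := a) (fun hh => hac hh) hMp2).1
        W2 (adj_gR pk.1) ((adj_gR hnc).symm)
    else W1 (adj_gg hac hbd)

lemma S3_path (mp mq : ℕ) (hmp : p = 2*mp) (hp1 : 1 ≤ mp) (hmq : q = 2*mq) (hq2 : 2 ≤ mq) :
    ∀ i j h, (S3walk mp mq hmp hp1 hmq hq2 i j h).IsPath := by
  intro i j h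
  match i, j with
  | none, none => exact absurd rfl h
  | none, some (a, b) => exact W1_path _
  | some (a, b), none => exact W1_path _
  | some (a, b), some (c, d) =>
    rw [S3walk]
    split_ifs with hac hMq hN hN' hbd hMp
    · subst hac
      have hdb : b ≠ d := fun he => h (by rw [he])
      refine W4_path _ _ _ _ gV_ne_Rv gV_ne_Tv (gV_ne_gV_right hdb) ?_ ?_ ?_
      · intro hh
        exact hdb (by linear_combination (Tv_inj hh))
      · exact fun hh => gV_ne_Tv hh.symm
      · exact fun hh => gV_ne_Rv hh.symm
    · subst hac
      exact W2_path _ _ (gV_ne_gV_right (fun he => h (by rw [he])))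
    · subst hac
      exact W2_path _ _ (gV_ne_gV_right (fun he => h (by rw [he])))
    · subst hac
      exact W2_path _ _ (gV_ne_gV_right (fun he => h (by rw [he])))
    · subst hbd
      exact W2_path _ _ (gV_ne_gV_left hac)
    · subst hbd
      exact W2_path _ _ (gV_ne_gV_left hac)
    · exact W1_path _

end S3
end ImmProof
namespace ImmProof
open SimpleGraph Walk

section S3b
variable {p q : ℕ} [NeZero p] [NeZero q]

lemma S3_label (mp mq : ℕ) (hmp : p = 2*mp) (hp1 : 1 ≤ mp) (hmq : q = 2*mq) (hq2 : 2 ≤ mq) :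
    ∀ i j h, ∀ dt ∈ (S3walk mp mq hmp hp1 hmq hq2 i j h).darts,
      F3 mp mq dt.toProd.1 dt.toProd.2 = s(i, j) ∧
      F3 mp mq dt.toProd.2 dt.toProd.1 = s(i, j) := by
  intro i j h dt hd
  match i, j with
  | none, none => exact absurd rfl h
  | none, some (a, b) =>
    rw [S3walk] at hd; erw [W1_darts, List.mem_singleton] at hd
    subst hd
    exact ⟨by simp only [F3, φ0, catOf_cnr, catOf_gV]; exact Sym2.eq_swap,
      by simp only [F3, φ0, catOf_cnr, catOf_gV]; exact Sym2.eq_swap⟩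
  | some (a, b), none =>
    rw [S3walk] at hd; erw [W1_darts, List.mem_singleton] at hd
    subst hd
    exact ⟨by simp only [F3, φ0, catOf_cnr, catOf_gV],
      by simp only [F3, φ0, catOf_cnr, catOf_gV]⟩
  | some (a, b), some (c, d) =>
    rw [S3walk] at hd
    split_ifs at hd with hac hMq hN hN' hbd hMp
    · -- rowM 4-path
      subst hac
      have hd1 : d = b + ((mq:ℕ) : ZMod q) := by linear_combination hMq
      have hd2 : d + ((mq:ℕ) : ZMod q) = b := by linear_combination hMq + (two_cast_m hmq)
      erw [W4_darts] at hd
      simp only [List.mem_cons, List.not_mem_nil, or_false] at hd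
      rcases hd with rfl | rfl | rfl | rfl
      · constructor <;>
        · simp only [F3, φ0, catOf_gV, catOf_Tv]
          rw [if_pos (dlt_shift_val hmq (by omega) b), ← hd1]
      · constructor <;>
        · simp only [F3, φ0, catOf_Tv, catOf_Rv]
          rw [show b + ((dlt mq : ℕ) : ZMod q) - ((dlt mq : ℕ) : ZMod q) = b from by ring, ← hd1]
      · constructor <;>
        · simp only [F3, φ0, catOf_Tv, catOf_Rv]
          rw [show d + ((dlt mq : ℕ) : ZMod q) - ((dlt mq : ℕ) : ZMod q) = d from by ring, hd2]
          exact Sym2.eq_swap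
      · constructor <;>
        · simp only [F3, φ0, catOf_gV, catOf_Tv]
          rw [if_pos (dlt_shift_val hmq (by omega) d), hd2]
          exact Sym2.eq_swap
    · -- N'' pair, b even
      subst hac
      obtain ⟨rfl, hb⟩ := hN
      have hb1 : ((b + 1 : ZMod q)).val % 2 = 1 := by
        rw [val_add_one_parity hmq (by omega) b]
        omega
      erw [W2_darts] at hd
      simp only [List.mem_cons, List.not_mem_nil, or_false] at hd
      rcases hd with rfl | rfl
      · constructor <;>
        · simp only [F3, φ0, catOf_gV, catOf_Rv]
          rw [if_pos (dlt_shift_val hmp hp1 a), if_pos hb]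
      · constructor <;>
        · simp only [F3, φ0, catOf_gV, catOf_Rv]
          rw [if_pos (dlt_shift_val hmp hp1 a), if_neg (by omega),
            show b + 1 - 1 = b from by ring]
          exact Sym2.eq_swap
    · -- N'' pair, reversed, d even
      subst hac
      obtain ⟨rfl, hdpar⟩ := hN'
      have hb1 : ((d + 1 : ZMod q)).val % 2 = 1 := by
        rw [val_add_one_parity hmq (by omega) d]
        omega
      erw [W2_darts] at hd
      simp only [List.mem_cons, List.not_mem_nil, or_false] at hd
      rcases hd with rfl | rfl
      · constructor <;>
        · simp only [F3, φ0, catOf_gV, catOf_Rv]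
          rw [if_pos (dlt_shift_val hmp hp1 a), if_neg (by omega),
            show d + 1 - 1 = d from by ring]
      · constructor <;>
        · simp only [F3, φ0, catOf_gV, catOf_Rv]
          rw [if_pos (dlt_shift_val hmp hp1 a), if_pos hdpar]
          exact Sym2.eq_swap
    · -- 2T row pair
      subst hac
      have hdb : d ≠ b := fun he => h (by rw [he])
      have hMq2 : b - d ≠ ((mq:ℕ) : ZMod q) := fun hh =>
        hMq (by linear_combination - hh - (two_cast_m hmq))
      have pk := scol_pack hmq hdb hMq
      have pk2 := scol_pack hmq (a := d) (c := b) (Ne.symm hdb) hMq2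
      have hsymm := scol_symm hmq hdb hMq
      erw [W2_darts] at hd
      simp only [List.mem_cons, List.not_mem_nil, or_false] at hd
      rcases hd with rfl | rfl
      · constructor <;>
        · simp only [F3, φ0, catOf_gV, catOf_Tv]
          rw [if_neg (fun hh => pk.2.2.1 hh), if_neg ?_, pk.2.1]
          rintro (⟨h1, h2⟩ | ⟨h1, h2⟩)
          · exact hN ⟨pk.2.2.2.2.1 h1, h2⟩
          · refine hN' ⟨pk.2.2.2.2.2 h1, ?_⟩
            have hpar := val_add_one_parity hmq (by omega) d
            rw [← pk.2.2.2.2.2 h1] at hpar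
            omega
      · constructor <;>
        · simp only [F3, φ0, catOf_gV, catOf_Tv]
          rw [if_neg (by rw [hsymm]; exact fun hh => pk2.2.2.1 hh), if_neg ?_]
          rw [hsymm, pk2.2.1]
          · exact Sym2.eq_swap
          rw [hsymm]
          rintro (⟨h1, h2⟩ | ⟨h1, h2⟩)
          · exact hN' ⟨pk2.2.2.2.2.1 h1, h2⟩
          · refine hN ⟨pk2.2.2.2.2.2 h1, ?_⟩
            have hpar := val_add_one_parity hmq (by omega) b
            rw [← pk2.2.2.2.2.2 h1] at hpar
            omega
    · -- colM 2T
      subst hbd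
      have hmc1 : a + ((mp:ℕ) : ZMod p) = c := by linear_combination - hMp
      have hmc2 : c + ((mp:ℕ) : ZMod p) = a := by linear_combination hMp + (two_cast_m hmp)
      have pv := piq_shift_val hmq hq2 b
      have hnd : ¬ ((b + piq mq b - b).val = dlt mq) := by
        rw [pv]; unfold dlt; split_ifs <;> omega
      have hyes : ((b + piq mq b - b).val = mq + 1 ∧ b.val % 2 = 0) ∨
          ((b + piq mq b - b).val = mq ∧ b.val % 2 = 1) := by
        rw [pv]
        rcases Nat.even_or_odd b.val with he | ho
        · left; have := Nat.even_iff.1 he; rw [if_pos this]; exact ⟨rfl, this⟩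
        · right; have := Nat.odd_iff.1 ho; rw [if_neg (by omega)]; exact ⟨rfl, this⟩
      erw [W2_darts] at hd
      simp only [List.mem_cons, List.not_mem_nil, or_false] at hd
      rcases hd with rfl | rfl
      · constructor <;>
        · simp only [F3, φ0, catOf_gV, catOf_Tv]
          rw [if_neg hnd, if_pos hyes, hmc1]
      · constructor <;>
        · simp only [F3, φ0, catOf_gV, catOf_Tv]
          rw [if_neg hnd, if_pos hyes, hmc2]
          exact Sym2.eq_swap
    · -- col 2R
      subst hbd
      have hca : c ≠ a := fun hh => hac hh.symm
      have hMp2 : a - c ≠ ((mp:ℕ) : ZMod p) := fun hh =>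
        hMp (by linear_combination - hh - (two_cast_m hmp))
      have pk := scol_pack hmp hca hMp
      have pk2 := scol_pack hmp (a := c) (c := a) (fun hh => hac hh) hMp2
      have hsymm := scol_symm hmp hca hMp
      erw [W2_darts] at hd
      simp only [List.mem_cons, List.not_mem_nil, or_false] at hd
      rcases hd with rfl | rfl
      · constructor <;>
        · simp only [F3, φ0, catOf_gV, catOf_Rv]
          rw [if_neg (fun hh => pk.2.2.1 hh), pk.2.1]
      · constructor <;>
        · simp only [F3, φ0, catOf_gV, catOf_Rv]
          rw [if_neg (by rw [hsymm]; exact fun hh => pk2.2.2.1 hh)]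
          rw [hsymm, pk2.2.1]
          exact Sym2.eq_swap
    · -- general
      erw [W1_darts, List.mem_singleton] at hd
      subst hd
      exact ⟨by simp only [F3, φ0, catOf_gV],
        by simp only [F3, φ0, catOf_gV]; exact Sym2.eq_swap⟩

theorem schemeS3 (hp : p % 2 = 0) (hq : q % 2 = 0) (hq4 : 4 ≤ q) :
    HasCliqueImmersion (KK p q) (p * q + 1) := by
  have hp0 := NeZero.ne p
  have hmp : p = 2 * (p/2) := by omega
  have hmq : q = 2 * (q/2) := by omega
  have := glue (KK p q) φ0 φ0_inj (F3 (p/2) (q/2))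
    (S3walk (p/2) (q/2) hmp (by omega) hmq (by omega))
    (S3_path (p/2) (q/2) hmp (by omega) hmq (by omega))
    (S3_label (p/2) (q/2) hmp (by omega) hmq (by omega))
  rwa [card_Idx] at this

end S3b
end ImmProof
namespace ImmProof
open SimpleGraph Walk

section schemes
variable {p q : ℕ} [NeZero p] [NeZero q]



end schemes

theorem lowerAll (p q : ℕ) [NeZero p] [NeZero q] :
    HasCliqueImmersion (KK p q) (p * q + 1) := by
  rcases Nat.even_or_odd p with hp | hp
  · -- p even
    have hp2 : p % 2 = 0 := Nat.even_iff.1 hp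
    rcases Nat.even_or_odd q with hq | hq
    · -- q even
      have hq2 : q % 2 = 0 := Nat.even_iff.1 hq
      rcases Nat.lt_or_ge q 4 with hq4 | hq4
      · -- q = 2
        have hq' : q = 2 := by
          have := (NeZero.ne q); omega
        subst hq'
        rcases Nat.lt_or_ge p 4 with hp4 | hp4
        · have hp' : p = 2 := by have := (NeZero.ne p); omega
          subst hp'
          exact schemeS5'
        · have := schemeS3 (p := 2) (q := p) (by norm_num) hp2 hp4
          have := KK_swap this
          rwa [Nat.mul_comm] at this
      · exact schemeS3 hp2 hq2 hq4
    · -- q odd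
      have hq2 : q % 2 = 1 := Nat.odd_iff.1 hq
      rcases Nat.lt_or_ge q 3 with hq3 | hq3
      · have hq' : q = 1 := by have := (NeZero.ne q); omega
        subst hq'
        exact schemeS4 hp2
      · exact schemeS2 hp2 hq2 hq3
  · -- p odd
    have hp2 : p % 2 = 1 := Nat.odd_iff.1 hp
    rcases Nat.even_or_odd q with hq | hq
    · -- q even : transpose
      have hq2 : q % 2 = 0 := Nat.even_iff.1 hq
      rcases Nat.lt_or_ge p 3 with hp3 | hp3
      · have hp' : p = 1 := by have := (NeZero.ne p); omega
        subst hp'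
        have := schemeS4 (p := q) hq2
        have := KK_swap this
        rwa [Nat.mul_comm] at this
      · have := schemeS2 (p := q) (q := p) hq2 hp2 hp3
        have := KK_swap this
        rwa [Nat.mul_comm] at this
    · exact schemeS1 hp2 (Nat.odd_iff.1 hq)

end ImmProof

theorem immersion_directProd_complete (t r : ℕ) (ht : 2 ≤ t) (hr : 2 ≤ r) :
    immersionNumber (directProd (⊤ : SimpleGraph (Fin t)) (⊤ : SimpleGraph (Fin r))) =
      (t - 1) * (r - 1) + 1 := by
  obtain ⟨p, rfl⟩ : ∃ p, t = p + 1 := ⟨t - 1, by omega⟩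
  obtain ⟨q, rfl⟩ : ∃ q, r = q + 1 := ⟨r - 1, by omega⟩
  haveI : NeZero p := ⟨by omega⟩
  haveI : NeZero q := ⟨by omega⟩
  simp only [Nat.add_sub_cancel]
  exact ImmProof.immersionNumber_eq _ _ (ImmProof.lowerAll p q)
    (fun m hm => ImmProof.upper m hm)
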